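/- For all n ≥ 0, F(n+6; n, 0) = (1/144)·(n+1)·(n⁵ + 32n⁴ + 407n³ + 2620n² + 8604n + 12240), where F counts Gessel walks of length n+6 from the origin to (n, 0). -/

import Mathlib

open Finset

/-- The four Gessel steps: W, E, NE, SW. -/
def gstep : Fin 4 → ℤ × ℤ
  | 0 => (-1, 0)
  | 1 => (1, 0)
  | 2 => (1, 1)
  | 3 => (-1, -1)

/-- Position of the walk `w` after `j` steps. -/
def wpos (m : ℕ) (w : Fin m → Fin 4) (j : ℕ) : ℤ × ℤ :=
  ∑ i : Fin m, if (i : ℕ) < j then gstep (w i) else 0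

/-- `gesselF m n1 n2` : number of Gessel walks of length `m` from the origin to `(n1, n2)`
staying in the first quadrant. -/
noncomputable def gesselF (m : ℕ) (n1 n2 : ℤ) : ℕ :=
  Nat.card {w : Fin m → Fin 4 //
    (∀ j, 1 ≤ j → j ≤ m → 0 ≤ (wpos m w j).1 ∧ 0 ≤ (wpos m w j).2) ∧
    wpos m w m = (n1, n2)}

/-- Partial sum of a `±1` sequence. -/
def pSum (m : ℕ) (f : Fin m → ℤ) (j : ℕ) : ℤ :=
  ∑ i : Fin m, if (i : ℕ) < j then f i else 0

lemma wpos_castSucc (m : ℕ) (w : Fin (m+1) → Fin 4) (j : ℕ) (hj : j ≤ m) :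
    wpos (m+1) w j = wpos m (fun i => w i.castSucc) j := by
  unfold wpos
  rw [Fin.sum_univ_castSucc]
  simp only [Fin.coe_castSucc, Fin.val_last]
  rw [if_neg (by omega), add_zero]

lemma wpos_snoc_last (m : ℕ) (w : Fin (m+1) → Fin 4) :
    wpos (m+1) w (m+1) = wpos m (fun i => w i.castSucc) m + gstep (w (Fin.last m)) := by
  unfold wpos
  rw [Fin.sum_univ_castSucc]
  simp only [Fin.coe_castSucc, Fin.val_last]
  rw [if_pos (by omega)]
  congr 1
  apply Finset.sum_congr rfl
  intro i _
  rw [if_pos (by omega), if_pos i.is_lt]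

lemma gesselF_succ (m : ℕ) (x y : ℤ) (hx : 0 ≤ x) (hy : 0 ≤ y) :
    gesselF (m+1) x y = gesselF m (x+1) y + gesselF m (x-1) y
      + gesselF m (x-1) (y-1) + gesselF m (x+1) (y+1) := by
  have E : {w : Fin (m+1) → Fin 4 //
      (∀ j, 1 ≤ j → j ≤ m+1 → 0 ≤ (wpos (m+1) w j).1 ∧ 0 ≤ (wpos (m+1) w j).2) ∧
      wpos (m+1) w (m+1) = (x, y)} ≃
    (s : Fin 4) × {w : Fin m → Fin 4 //
      (∀ j, 1 ≤ j → j ≤ m → 0 ≤ (wpos m w j).1 ∧ 0 ≤ (wpos m w j).2) ∧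
      wpos m w m = (x - (gstep s).1, y - (gstep s).2)} := by
    refine ⟨fun w => ⟨w.1 (Fin.last m), ⟨fun i => w.1 i.castSucc, ?_, ?_⟩⟩,
      fun p => ⟨Fin.snoc (α := fun _ => Fin 4) p.2.1 p.1, ?_, ?_⟩, ?_, ?_⟩
    · intro j h1 h2
      rw [← wpos_castSucc m w.1 j h2]
      exact w.2.1 j h1 (by omega)
    · have h := wpos_snoc_last m w.1
      rw [w.2.2] at h
      have h2 := eq_sub_of_add_eq h.symm
      rw [h2]
      rfl
    · intro j h1 h2
      rcases Nat.lt_or_ge j (m+1) with h | h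
      · rw [wpos_castSucc m _ j (by omega)]
        have e : (fun i => Fin.snoc (α := fun _ => Fin 4) p.2.1 p.1 (Fin.castSucc i)) = p.2.1 := by
          funext i; simp
        rw [e]
        exact p.2.2.1 j h1 (by omega)
      · have hj : j = m + 1 := by omega
        subst hj
        rw [wpos_snoc_last]
        have e : (fun i => Fin.snoc (α := fun _ => Fin 4) p.2.1 p.1 (Fin.castSucc i)) = p.2.1 := by
          funext i; simp
        rw [e, Fin.snoc_last, p.2.2.2]
        constructor <;> simp <;> linarith
    · rw [wpos_snoc_last]
      have e : (fun i => Fin.snoc (α := fun _ => Fin 4) p.2.1 p.1 (Fin.castSucc i)) = p.2.1 := by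
        funext i; simp
      rw [e, Fin.snoc_last, p.2.2.2]
      ext <;> simp
    · intro w
      apply Subtype.ext
      funext i
      simp only
      induction i using Fin.lastCases with
      | last => simp
      | cast i => simp
    · rintro ⟨s, w, hw⟩
      have h1 : Fin.snoc (α := fun _ => Fin 4) w s (Fin.last m) = s := by simp
      refine Sigma.ext h1 ?_
      refine (Subtype.heq_iff_coe_eq ?_).2 ?_
      · intro f
        simp only [Fin.snoc_last]
      · show (fun i => Fin.snoc (α := fun _ => Fin 4) w s i.castSucc) = w
        funext i
        simp
  classical
  letI : ∀ s : Fin 4, Fintype {w : Fin m → Fin 4 //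
      (∀ j, 1 ≤ j → j ≤ m → 0 ≤ (wpos m w j).1 ∧ 0 ≤ (wpos m w j).2) ∧
      wpos m w m = (x - (gstep s).1, y - (gstep s).2)} := fun s => Fintype.ofFinite _
  rw [gesselF, Nat.card_congr E, Nat.card_eq_fintype_card, Fintype.card_sigma,
    Fin.sum_univ_four]
  have key : ∀ s : Fin 4, Fintype.card {w : Fin m → Fin 4 //
      (∀ j, 1 ≤ j → j ≤ m → 0 ≤ (wpos m w j).1 ∧ 0 ≤ (wpos m w j).2) ∧
      wpos m w m = (x - (gstep s).1, y - (gstep s).2)} =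
      gesselF m (x - (gstep s).1) (y - (gstep s).2) := fun s =>
    (Nat.card_eq_fintype_card).symm
  rw [key 0, key 1, key 2, key 3]
  have e0 : (gstep 0) = (-1, 0) := rfl
  have e1 : (gstep 1) = (1, 0) := rfl
  have e2 : (gstep 2) = (1, 1) := rfl
  have e3 : (gstep 3) = (-1, -1) := rfl
  rw [e0, e1, e2, e3]
  norm_num [sub_neg_eq_add]

lemma gesselF_neg (m : ℕ) (hm : 1 ≤ m) (x y : ℤ) (h : x < 0 ∨ y < 0) :
    gesselF m x y = 0 := by
  rw [gesselF]
  have : IsEmpty {w : Fin m → Fin 4 //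
      (∀ j, 1 ≤ j → j ≤ m → 0 ≤ (wpos m w j).1 ∧ 0 ≤ (wpos m w j).2) ∧
      wpos m w m = (x, y)} := by
    constructor
    rintro ⟨w, h1, h2⟩
    have h3 := h1 m hm le_rfl
    rw [h2] at h3
    rcases h with h | h <;> simp at h3 <;> omega
  exact Nat.card_of_isEmpty

lemma fst_wpos_le (m : ℕ) (w : Fin m → Fin 4) : (wpos m w m).1 ≤ m := by
  have hb : ∀ s : Fin 4, (gstep s).1 ≤ 1 := by decide
  rw [wpos, Prod.fst_sum]
  calc (∑ i : Fin m, (if (i : ℕ) < m then gstep (w i) else 0).1)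
      ≤ ∑ _i : Fin m, (1 : ℤ) := by
        apply Finset.sum_le_sum
        intro i _
        split
        · exact hb _
        · norm_num
    _ = m := by simp

lemma gesselF_big (m : ℕ) (x y : ℤ) (h : (m : ℤ) < x) : gesselF m x y = 0 := by
  rw [gesselF]
  have : IsEmpty {w : Fin m → Fin 4 //
      (∀ j, 1 ≤ j → j ≤ m → 0 ≤ (wpos m w j).1 ∧ 0 ≤ (wpos m w j).2) ∧
      wpos m w m = (x, y)} := by
    constructor
    rintro ⟨w, h1, h2⟩
    have h3 := fst_wpos_le m w
    rw [h2] at h3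
    simp at h3
    omega
  exact Nat.card_of_isEmpty

lemma gesselF_zero_zero : gesselF 0 0 0 = 1 := by
  rw [gesselF]
  have : Unique {w : Fin 0 → Fin 4 //
      (∀ j, 1 ≤ j → j ≤ 0 → 0 ≤ (wpos 0 w j).1 ∧ 0 ≤ (wpos 0 w j).2) ∧
      wpos 0 w 0 = (0, 0)} := by
    refine ⟨⟨⟨fun i => i.elim0, ?_, ?_⟩⟩, ?_⟩
    · intro j h1 h2
      omega
    · simp [wpos]; rfl
    · rintro ⟨w, hw⟩
      apply Subtype.ext
      funext i
      exact i.elim0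
  exact Nat.card_unique

lemma gesselF_zero_ne (x y : ℤ) (h : ¬(x = 0 ∧ y = 0)) : gesselF 0 x y = 0 := by
  rw [gesselF]
  have : IsEmpty {w : Fin 0 → Fin 4 //
      (∀ j, 1 ≤ j → j ≤ 0 → 0 ≤ (wpos 0 w j).1 ∧ 0 ≤ (wpos 0 w j).2) ∧
      wpos 0 w 0 = (x, y)} := by
    constructor
    rintro ⟨w, h1, h2⟩
    have : wpos 0 w 0 = (0, 0) := by simp [wpos]; rfl
    rw [this] at h2
    exact h ⟨congrArg Prod.fst h2.symm, congrArg Prod.snd h2.symm⟩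
  exact Nat.card_of_isEmpty

lemma gb_0_0_0 : gesselF 0 0 0 = 1 := gesselF_zero_zero
lemma gb_0_0_1 : gesselF 0 0 1 = 0 := gesselF_zero_ne 0 1 (by norm_num)
lemma gb_0_0_2 : gesselF 0 0 2 = 0 := gesselF_zero_ne 0 2 (by norm_num)
lemma gb_0_0_3 : gesselF 0 0 3 = 0 := gesselF_zero_ne 0 3 (by norm_num)
lemma gb_1_1_0 : gesselF 1 1 0 = 1 := by
  have h := gesselF_succ 0 1 0 (by norm_num) (by norm_num)
  norm_num at h
  rw [h, gesselF_zero_ne (2) (0) (by norm_num), gb_0_0_0, gesselF_zero_ne (0) (-1) (by norm_num), gesselF_zero_ne (2) (1) (by norm_num)]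
lemma gb_1_1_1 : gesselF 1 1 1 = 1 := by
  have h := gesselF_succ 0 1 1 (by norm_num) (by norm_num)
  norm_num at h
  rw [h, gesselF_zero_ne (2) (1) (by norm_num), gb_0_0_1, gb_0_0_0, gesselF_zero_ne (2) (2) (by norm_num)]
lemma gb_1_1_2 : gesselF 1 1 2 = 0 := by
  have h := gesselF_succ 0 1 2 (by norm_num) (by norm_num)
  norm_num at h
  rw [h, gesselF_zero_ne (2) (2) (by norm_num), gb_0_0_2, gb_0_0_1, gesselF_zero_ne (2) (3) (by norm_num)]
lemma gb_1_1_3 : gesselF 1 1 3 = 0 := by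
  have h := gesselF_succ 0 1 3 (by norm_num) (by norm_num)
  norm_num at h
  rw [h, gesselF_zero_ne (2) (3) (by norm_num), gb_0_0_3, gb_0_0_2, gesselF_zero_ne (2) (4) (by norm_num)]
lemma gb_2_0_0 : gesselF 2 0 0 = 2 := by
  have h := gesselF_succ 1 0 0 (by norm_num) (by norm_num)
  norm_num at h
  rw [h, gb_1_1_0, gesselF_neg 1 (by norm_num) (-1) (0) (Or.inl (by norm_num)), gesselF_neg 1 (by norm_num) (-1) (-1) (Or.inl (by norm_num)), gb_1_1_1]
lemma gb_2_0_1 : gesselF 2 0 1 = 1 := by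
  have h := gesselF_succ 1 0 1 (by norm_num) (by norm_num)
  norm_num at h
  rw [h, gb_1_1_1, gesselF_neg 1 (by norm_num) (-1) (1) (Or.inl (by norm_num)), gesselF_neg 1 (by norm_num) (-1) (0) (Or.inl (by norm_num)), gb_1_1_2]
lemma gb_2_0_2 : gesselF 2 0 2 = 0 := by
  have h := gesselF_succ 1 0 2 (by norm_num) (by norm_num)
  norm_num at h
  rw [h, gb_1_1_2, gesselF_neg 1 (by norm_num) (-1) (2) (Or.inl (by norm_num)), gesselF_neg 1 (by norm_num) (-1) (1) (Or.inl (by norm_num)), gb_1_1_3]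
lemma gb_2_2_0 : gesselF 2 2 0 = 1 := by
  have h := gesselF_succ 1 2 0 (by norm_num) (by norm_num)
  norm_num at h
  rw [h, gesselF_big 1 (3) (0) (by norm_num), gb_1_1_0, gesselF_neg 1 (by norm_num) (1) (-1) (Or.inr (by norm_num)), gesselF_big 1 (3) (1) (by norm_num)]
lemma gb_2_2_1 : gesselF 2 2 1 = 2 := by
  have h := gesselF_succ 1 2 1 (by norm_num) (by norm_num)
  norm_num at h
  rw [h, gesselF_big 1 (3) (1) (by norm_num), gb_1_1_1, gb_1_1_0, gesselF_big 1 (3) (2) (by norm_num)]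
lemma gb_2_2_2 : gesselF 2 2 2 = 1 := by
  have h := gesselF_succ 1 2 2 (by norm_num) (by norm_num)
  norm_num at h
  rw [h, gesselF_big 1 (3) (2) (by norm_num), gb_1_1_2, gb_1_1_1, gesselF_big 1 (3) (3) (by norm_num)]
lemma gb_2_2_3 : gesselF 2 2 3 = 0 := by
  have h := gesselF_succ 1 2 3 (by norm_num) (by norm_num)
  norm_num at h
  rw [h, gesselF_big 1 (3) (3) (by norm_num), gb_1_1_3, gb_1_1_2, gesselF_big 1 (3) (4) (by norm_num)]
lemma gb_3_1_0 : gesselF 3 1 0 = 5 := by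
  have h := gesselF_succ 2 1 0 (by norm_num) (by norm_num)
  norm_num at h
  rw [h, gb_2_2_0, gb_2_0_0, gesselF_neg 2 (by norm_num) (0) (-1) (Or.inr (by norm_num)), gb_2_2_1]
lemma gb_3_1_1 : gesselF 3 1 1 = 6 := by
  have h := gesselF_succ 2 1 1 (by norm_num) (by norm_num)
  norm_num at h
  rw [h, gb_2_2_1, gb_2_0_1, gb_2_0_0, gb_2_2_2]
lemma gb_3_1_2 : gesselF 3 1 2 = 2 := by
  have h := gesselF_succ 2 1 2 (by norm_num) (by norm_num)
  norm_num at h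
  rw [h, gb_2_2_2, gb_2_0_2, gb_2_0_1, gb_2_2_3]
lemma gb_3_3_0 : gesselF 3 3 0 = 1 := by
  have h := gesselF_succ 2 3 0 (by norm_num) (by norm_num)
  norm_num at h
  rw [h, gesselF_big 2 (4) (0) (by norm_num), gb_2_2_0, gesselF_neg 2 (by norm_num) (2) (-1) (Or.inr (by norm_num)), gesselF_big 2 (4) (1) (by norm_num)]
lemma gb_3_3_1 : gesselF 3 3 1 = 3 := by
  have h := gesselF_succ 2 3 1 (by norm_num) (by norm_num)
  norm_num at h
  rw [h, gesselF_big 2 (4) (1) (by norm_num), gb_2_2_1, gb_2_2_0, gesselF_big 2 (4) (2) (by norm_num)]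
lemma gb_3_3_2 : gesselF 3 3 2 = 3 := by
  have h := gesselF_succ 2 3 2 (by norm_num) (by norm_num)
  norm_num at h
  rw [h, gesselF_big 2 (4) (2) (by norm_num), gb_2_2_2, gb_2_2_1, gesselF_big 2 (4) (3) (by norm_num)]
lemma gb_3_3_3 : gesselF 3 3 3 = 1 := by
  have h := gesselF_succ 2 3 3 (by norm_num) (by norm_num)
  norm_num at h
  rw [h, gesselF_big 2 (4) (3) (by norm_num), gb_2_2_3, gb_2_2_2, gesselF_big 2 (4) (4) (by norm_num)]
lemma gb_4_0_0 : gesselF 4 0 0 = 11 := by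
  have h := gesselF_succ 3 0 0 (by norm_num) (by norm_num)
  norm_num at h
  rw [h, gb_3_1_0, gesselF_neg 3 (by norm_num) (-1) (0) (Or.inl (by norm_num)), gesselF_neg 3 (by norm_num) (-1) (-1) (Or.inl (by norm_num)), gb_3_1_1]
lemma gb_4_0_1 : gesselF 4 0 1 = 8 := by
  have h := gesselF_succ 3 0 1 (by norm_num) (by norm_num)
  norm_num at h
  rw [h, gb_3_1_1, gesselF_neg 3 (by norm_num) (-1) (1) (Or.inl (by norm_num)), gesselF_neg 3 (by norm_num) (-1) (0) (Or.inl (by norm_num)), gb_3_1_2]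
lemma gb_4_2_0 : gesselF 4 2 0 = 9 := by
  have h := gesselF_succ 3 2 0 (by norm_num) (by norm_num)
  norm_num at h
  rw [h, gb_3_3_0, gb_3_1_0, gesselF_neg 3 (by norm_num) (1) (-1) (Or.inr (by norm_num)), gb_3_3_1]
lemma gb_4_2_1 : gesselF 4 2 1 = 17 := by
  have h := gesselF_succ 3 2 1 (by norm_num) (by norm_num)
  norm_num at h
  rw [h, gb_3_3_1, gb_3_1_1, gb_3_1_0, gb_3_3_2]
lemma gb_4_2_2 : gesselF 4 2 2 = 12 := by
  have h := gesselF_succ 3 2 2 (by norm_num) (by norm_num)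
  norm_num at h
  rw [h, gb_3_3_2, gb_3_1_2, gb_3_1_1, gb_3_3_3]
lemma gb_4_4_0 : gesselF 4 4 0 = 1 := by
  have h := gesselF_succ 3 4 0 (by norm_num) (by norm_num)
  norm_num at h
  rw [h, gesselF_big 3 (5) (0) (by norm_num), gb_3_3_0, gesselF_neg 3 (by norm_num) (3) (-1) (Or.inr (by norm_num)), gesselF_big 3 (5) (1) (by norm_num)]
lemma gb_4_4_1 : gesselF 4 4 1 = 4 := by
  have h := gesselF_succ 3 4 1 (by norm_num) (by norm_num)
  norm_num at h
  rw [h, gesselF_big 3 (5) (1) (by norm_num), gb_3_3_1, gb_3_3_0, gesselF_big 3 (5) (2) (by norm_num)]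
lemma gb_4_4_2 : gesselF 4 4 2 = 6 := by
  have h := gesselF_succ 3 4 2 (by norm_num) (by norm_num)
  norm_num at h
  rw [h, gesselF_big 3 (5) (2) (by norm_num), gb_3_3_2, gb_3_3_1, gesselF_big 3 (5) (3) (by norm_num)]
lemma gb_4_4_3 : gesselF 4 4 3 = 4 := by
  have h := gesselF_succ 3 4 3 (by norm_num) (by norm_num)
  norm_num at h
  rw [h, gesselF_big 3 (5) (3) (by norm_num), gb_3_3_3, gb_3_3_2, gesselF_big 3 (5) (4) (by norm_num)]
lemma gb_5_1_0 : gesselF 5 1 0 = 37 := by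
  have h := gesselF_succ 4 1 0 (by norm_num) (by norm_num)
  norm_num at h
  rw [h, gb_4_2_0, gb_4_0_0, gesselF_neg 4 (by norm_num) (0) (-1) (Or.inr (by norm_num)), gb_4_2_1]
lemma gb_5_1_1 : gesselF 5 1 1 = 48 := by
  have h := gesselF_succ 4 1 1 (by norm_num) (by norm_num)
  norm_num at h
  rw [h, gb_4_2_1, gb_4_0_1, gb_4_0_0, gb_4_2_2]
lemma gb_5_3_0 : gesselF 5 3 0 = 14 := by
  have h := gesselF_succ 4 3 0 (by norm_num) (by norm_num)
  norm_num at h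
  rw [h, gb_4_4_0, gb_4_2_0, gesselF_neg 4 (by norm_num) (2) (-1) (Or.inr (by norm_num)), gb_4_4_1]
lemma gb_5_3_1 : gesselF 5 3 1 = 36 := by
  have h := gesselF_succ 4 3 1 (by norm_num) (by norm_num)
  norm_num at h
  rw [h, gb_4_4_1, gb_4_2_1, gb_4_2_0, gb_4_4_2]
lemma gb_5_3_2 : gesselF 5 3 2 = 39 := by
  have h := gesselF_succ 4 3 2 (by norm_num) (by norm_num)
  norm_num at h
  rw [h, gb_4_4_2, gb_4_2_2, gb_4_2_1, gb_4_4_3]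
lemma gb_5_5_0 : gesselF 5 5 0 = 1 := by
  have h := gesselF_succ 4 5 0 (by norm_num) (by norm_num)
  norm_num at h
  rw [h, gesselF_big 4 (6) (0) (by norm_num), gb_4_4_0, gesselF_neg 4 (by norm_num) (4) (-1) (Or.inr (by norm_num)), gesselF_big 4 (6) (1) (by norm_num)]
lemma gb_5_5_1 : gesselF 5 5 1 = 5 := by
  have h := gesselF_succ 4 5 1 (by norm_num) (by norm_num)
  norm_num at h
  rw [h, gesselF_big 4 (6) (1) (by norm_num), gb_4_4_1, gb_4_4_0, gesselF_big 4 (6) (2) (by norm_num)]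
lemma gb_5_5_2 : gesselF 5 5 2 = 10 := by
  have h := gesselF_succ 4 5 2 (by norm_num) (by norm_num)
  norm_num at h
  rw [h, gesselF_big 4 (6) (2) (by norm_num), gb_4_4_2, gb_4_4_1, gesselF_big 4 (6) (3) (by norm_num)]
lemma gb_5_5_3 : gesselF 5 5 3 = 10 := by
  have h := gesselF_succ 4 5 3 (by norm_num) (by norm_num)
  norm_num at h
  rw [h, gesselF_big 4 (6) (3) (by norm_num), gb_4_4_3, gb_4_4_2, gesselF_big 4 (6) (4) (by norm_num)]
lemma gb_6_0_0 : gesselF 6 0 0 = 85 := by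
  have h := gesselF_succ 5 0 0 (by norm_num) (by norm_num)
  norm_num at h
  rw [h, gb_5_1_0, gesselF_neg 5 (by norm_num) (-1) (0) (Or.inl (by norm_num)), gesselF_neg 5 (by norm_num) (-1) (-1) (Or.inl (by norm_num)), gb_5_1_1]
lemma gb_6_2_0 : gesselF 6 2 0 = 87 := by
  have h := gesselF_succ 5 2 0 (by norm_num) (by norm_num)
  norm_num at h
  rw [h, gb_5_3_0, gb_5_1_0, gesselF_neg 5 (by norm_num) (1) (-1) (Or.inr (by norm_num)), gb_5_3_1]
lemma gb_6_2_1 : gesselF 6 2 1 = 160 := by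
  have h := gesselF_succ 5 2 1 (by norm_num) (by norm_num)
  norm_num at h
  rw [h, gb_5_3_1, gb_5_1_1, gb_5_1_0, gb_5_3_2]
lemma gb_6_4_0 : gesselF 6 4 0 = 20 := by
  have h := gesselF_succ 5 4 0 (by norm_num) (by norm_num)
  norm_num at h
  rw [h, gb_5_5_0, gb_5_3_0, gesselF_neg 5 (by norm_num) (3) (-1) (Or.inr (by norm_num)), gb_5_5_1]
lemma gb_6_4_1 : gesselF 6 4 1 = 65 := by
  have h := gesselF_succ 5 4 1 (by norm_num) (by norm_num)
  norm_num at h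
  rw [h, gb_5_5_1, gb_5_3_1, gb_5_3_0, gb_5_5_2]
lemma gb_6_4_2 : gesselF 6 4 2 = 95 := by
  have h := gesselF_succ 5 4 2 (by norm_num) (by norm_num)
  norm_num at h
  rw [h, gb_5_5_2, gb_5_3_2, gb_5_3_1, gb_5_5_3]
lemma gb_6_6_0 : gesselF 6 6 0 = 1 := by
  have h := gesselF_succ 5 6 0 (by norm_num) (by norm_num)
  norm_num at h
  rw [h, gesselF_big 5 (7) (0) (by norm_num), gb_5_5_0, gesselF_neg 5 (by norm_num) (5) (-1) (Or.inr (by norm_num)), gesselF_big 5 (7) (1) (by norm_num)]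
lemma gb_6_6_1 : gesselF 6 6 1 = 6 := by
  have h := gesselF_succ 5 6 1 (by norm_num) (by norm_num)
  norm_num at h
  rw [h, gesselF_big 5 (7) (1) (by norm_num), gb_5_5_1, gb_5_5_0, gesselF_big 5 (7) (2) (by norm_num)]
lemma gb_6_6_2 : gesselF 6 6 2 = 15 := by
  have h := gesselF_succ 5 6 2 (by norm_num) (by norm_num)
  norm_num at h
  rw [h, gesselF_big 5 (7) (2) (by norm_num), gb_5_5_2, gb_5_5_1, gesselF_big 5 (7) (3) (by norm_num)]
lemma gb_6_6_3 : gesselF 6 6 3 = 20 := by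
  have h := gesselF_succ 5 6 3 (by norm_num) (by norm_num)
  norm_num at h
  rw [h, gesselF_big 5 (7) (3) (by norm_num), gb_5_5_3, gb_5_5_2, gesselF_big 5 (7) (4) (by norm_num)]

lemma key : ∀ n : ℕ,
      (144 * gesselF (n + 6) ((n : ℤ) + 6) (0 : ℤ) = 144) ∧
      (144 * gesselF (n + 6) ((n : ℤ) + 6) (1 : ℤ) = 864 + 144 * n) ∧
      (144 * gesselF (n + 6) ((n : ℤ) + 6) (2 : ℤ) = 2160 + 792 * n + 72 * n ^ 2) ∧
      (144 * gesselF (n + 6) ((n : ℤ) + 6) (3 : ℤ) = 2880 + 1776 * n + 360 * n ^ 2 + 24 * n ^ 3) ∧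
      (144 * gesselF (n + 6) ((n : ℤ) + 4) (0 : ℤ) = 2880 + 936 * n + 72 * n ^ 2) ∧
      (144 * gesselF (n + 6) ((n : ℤ) + 4) (1 : ℤ) = 9360 + 4992 * n + 864 * n ^ 2 + 48 * n ^ 3) ∧
      (144 * gesselF (n + 6) ((n : ℤ) + 4) (2 : ℤ) = 13680 + 10836 * n + 3150 * n ^ 2 + 396 * n ^ 3 + 18 * n ^ 4) ∧
      (144 * gesselF (n + 6) ((n : ℤ) + 2) (0 : ℤ) = 12528 + 9432 * n + 2508 * n ^ 2 + 288 * n ^ 3 + 12 * n ^ 4) ∧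
      (144 * gesselF (n + 6) ((n : ℤ) + 2) (1 : ℤ) = 23040 + 24024 * n + 9552 * n ^ 2 + 1818 * n ^ 3 + 168 * n ^ 4 + 6 * n ^ 5) ∧
      (144 * gesselF (n + 6) ((n : ℤ)) (0 : ℤ) = 12240 + 20844 * n + 11224 * n ^ 2 + 3027 * n ^ 3 + 439 * n ^ 4 + 33 * n ^ 5 + 1 * n ^ 6) := by
  intro n
  induction n with
  | zero =>
    refine ⟨?_, ?_, ?_, ?_, ?_, ?_, ?_, ?_, ?_, ?_⟩ <;>
      norm_num [gb_6_6_0, gb_6_6_1, gb_6_6_2, gb_6_6_3, gb_6_4_0, gb_6_4_1, gb_6_4_2, gb_6_2_0, gb_6_2_1, gb_6_0_0]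
  | succ n ih =>
    obtain ⟨i00, i01, i02, i03, i20, i21, i22, i40, i41, i60⟩ := ih
    refine ⟨?_, ?_, ?_, ?_, ?_, ?_, ?_, ?_, ?_, ?_⟩
    · have h := gesselF_succ (n + 6) ((n : ℤ) + 7) (0 : ℤ) (by omega) (by norm_num)
      rw [(by ring : (n : ℤ) + 7 + 1 = (n : ℤ) + 8)] at h
      rw [(by ring : (n : ℤ) + 7 - 1 = (n : ℤ) + 6)] at h
      rw [(by norm_num : (0 : ℤ) - 1 = (-1 : ℤ))] at h
      rw [(by norm_num : (0 : ℤ) + 1 = (1 : ℤ))] at h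
      rw [gesselF_big (n + 6) ((n : ℤ) + 8) (0 : ℤ) (by push_cast; omega)] at h
      rw [gesselF_big (n + 6) ((n : ℤ) + 8) (1 : ℤ) (by push_cast; omega)] at h
      rw [gesselF_neg (n + 6) (by omega) ((n : ℤ) + 6) (-1) (Or.inr (by norm_num))] at h
      rw [(by omega : n + 1 + 6 = n + 6 + 1)]
      rw [(by push_cast; ring : ((n + 1 : ℕ) : ℤ) + 6 = (n : ℤ) + 7)]
      rw [h, mul_add, mul_add, mul_add]
      rw [i00]
      try ring
    · have h := gesselF_succ (n + 6) ((n : ℤ) + 7) (1 : ℤ) (by omega) (by norm_num)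
      rw [(by ring : (n : ℤ) + 7 + 1 = (n : ℤ) + 8)] at h
      rw [(by ring : (n : ℤ) + 7 - 1 = (n : ℤ) + 6)] at h
      rw [(by norm_num : (1 : ℤ) - 1 = (0 : ℤ))] at h
      rw [(by norm_num : (1 : ℤ) + 1 = (2 : ℤ))] at h
      rw [gesselF_big (n + 6) ((n : ℤ) + 8) (1 : ℤ) (by push_cast; omega)] at h
      rw [gesselF_big (n + 6) ((n : ℤ) + 8) (2 : ℤ) (by push_cast; omega)] at h
      rw [(by omega : n + 1 + 6 = n + 6 + 1)]
      rw [(by push_cast; ring : ((n + 1 : ℕ) : ℤ) + 6 = (n : ℤ) + 7)]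
      rw [h, mul_add, mul_add, mul_add]
      rw [i01, i00]
      try ring
    · have h := gesselF_succ (n + 6) ((n : ℤ) + 7) (2 : ℤ) (by omega) (by norm_num)
      rw [(by ring : (n : ℤ) + 7 + 1 = (n : ℤ) + 8)] at h
      rw [(by ring : (n : ℤ) + 7 - 1 = (n : ℤ) + 6)] at h
      rw [(by norm_num : (2 : ℤ) - 1 = (1 : ℤ))] at h
      rw [(by norm_num : (2 : ℤ) + 1 = (3 : ℤ))] at h
      rw [gesselF_big (n + 6) ((n : ℤ) + 8) (2 : ℤ) (by push_cast; omega)] at h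
      rw [gesselF_big (n + 6) ((n : ℤ) + 8) (3 : ℤ) (by push_cast; omega)] at h
      rw [(by omega : n + 1 + 6 = n + 6 + 1)]
      rw [(by push_cast; ring : ((n + 1 : ℕ) : ℤ) + 6 = (n : ℤ) + 7)]
      rw [h, mul_add, mul_add, mul_add]
      rw [i02, i01]
      try ring
    · have h := gesselF_succ (n + 6) ((n : ℤ) + 7) (3 : ℤ) (by omega) (by norm_num)
      rw [(by ring : (n : ℤ) + 7 + 1 = (n : ℤ) + 8)] at h
      rw [(by ring : (n : ℤ) + 7 - 1 = (n : ℤ) + 6)] at h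
      rw [(by norm_num : (3 : ℤ) - 1 = (2 : ℤ))] at h
      rw [(by norm_num : (3 : ℤ) + 1 = (4 : ℤ))] at h
      rw [gesselF_big (n + 6) ((n : ℤ) + 8) (3 : ℤ) (by push_cast; omega)] at h
      rw [gesselF_big (n + 6) ((n : ℤ) + 8) (4 : ℤ) (by push_cast; omega)] at h
      rw [(by omega : n + 1 + 6 = n + 6 + 1)]
      rw [(by push_cast; ring : ((n + 1 : ℕ) : ℤ) + 6 = (n : ℤ) + 7)]
      rw [h, mul_add, mul_add, mul_add]
      rw [i03, i02]
      try ring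
    · have h := gesselF_succ (n + 6) ((n : ℤ) + 5) (0 : ℤ) (by omega) (by norm_num)
      rw [(by ring : (n : ℤ) + 5 + 1 = (n : ℤ) + 6)] at h
      rw [(by ring : (n : ℤ) + 5 - 1 = (n : ℤ) + 4)] at h
      rw [(by norm_num : (0 : ℤ) - 1 = (-1 : ℤ))] at h
      rw [(by norm_num : (0 : ℤ) + 1 = (1 : ℤ))] at h
      rw [gesselF_neg (n + 6) (by omega) ((n : ℤ) + 4) (-1) (Or.inr (by norm_num))] at h
      rw [(by omega : n + 1 + 6 = n + 6 + 1)]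
      rw [(by push_cast; ring : ((n + 1 : ℕ) : ℤ) + 4 = (n : ℤ) + 5)]
      rw [h, mul_add, mul_add, mul_add]
      rw [i00, i20, i01]
      try ring
    · have h := gesselF_succ (n + 6) ((n : ℤ) + 5) (1 : ℤ) (by omega) (by norm_num)
      rw [(by ring : (n : ℤ) + 5 + 1 = (n : ℤ) + 6)] at h
      rw [(by ring : (n : ℤ) + 5 - 1 = (n : ℤ) + 4)] at h
      rw [(by norm_num : (1 : ℤ) - 1 = (0 : ℤ))] at h
      rw [(by norm_num : (1 : ℤ) + 1 = (2 : ℤ))] at h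
      rw [(by omega : n + 1 + 6 = n + 6 + 1)]
      rw [(by push_cast; ring : ((n + 1 : ℕ) : ℤ) + 4 = (n : ℤ) + 5)]
      rw [h, mul_add, mul_add, mul_add]
      rw [i01, i21, i20, i02]
      try ring
    · have h := gesselF_succ (n + 6) ((n : ℤ) + 5) (2 : ℤ) (by omega) (by norm_num)
      rw [(by ring : (n : ℤ) + 5 + 1 = (n : ℤ) + 6)] at h
      rw [(by ring : (n : ℤ) + 5 - 1 = (n : ℤ) + 4)] at h
      rw [(by norm_num : (2 : ℤ) - 1 = (1 : ℤ))] at h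
      rw [(by norm_num : (2 : ℤ) + 1 = (3 : ℤ))] at h
      rw [(by omega : n + 1 + 6 = n + 6 + 1)]
      rw [(by push_cast; ring : ((n + 1 : ℕ) : ℤ) + 4 = (n : ℤ) + 5)]
      rw [h, mul_add, mul_add, mul_add]
      rw [i02, i22, i21, i03]
      try ring
    · have h := gesselF_succ (n + 6) ((n : ℤ) + 3) (0 : ℤ) (by omega) (by norm_num)
      rw [(by ring : (n : ℤ) + 3 + 1 = (n : ℤ) + 4)] at h
      rw [(by ring : (n : ℤ) + 3 - 1 = (n : ℤ) + 2)] at h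
      rw [(by norm_num : (0 : ℤ) - 1 = (-1 : ℤ))] at h
      rw [(by norm_num : (0 : ℤ) + 1 = (1 : ℤ))] at h
      rw [gesselF_neg (n + 6) (by omega) ((n : ℤ) + 2) (-1) (Or.inr (by norm_num))] at h
      rw [(by omega : n + 1 + 6 = n + 6 + 1)]
      rw [(by push_cast; ring : ((n + 1 : ℕ) : ℤ) + 2 = (n : ℤ) + 3)]
      rw [h, mul_add, mul_add, mul_add]
      rw [i20, i40, i21]
      try ring
    · have h := gesselF_succ (n + 6) ((n : ℤ) + 3) (1 : ℤ) (by omega) (by norm_num)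
      rw [(by ring : (n : ℤ) + 3 + 1 = (n : ℤ) + 4)] at h
      rw [(by ring : (n : ℤ) + 3 - 1 = (n : ℤ) + 2)] at h
      rw [(by norm_num : (1 : ℤ) - 1 = (0 : ℤ))] at h
      rw [(by norm_num : (1 : ℤ) + 1 = (2 : ℤ))] at h
      rw [(by omega : n + 1 + 6 = n + 6 + 1)]
      rw [(by push_cast; ring : ((n + 1 : ℕ) : ℤ) + 2 = (n : ℤ) + 3)]
      rw [h, mul_add, mul_add, mul_add]
      rw [i21, i41, i40, i22]
      try ring
    · have h := gesselF_succ (n + 6) ((n : ℤ) + 1) (0 : ℤ) (by omega) (by norm_num)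
      rw [(by ring : (n : ℤ) + 1 + 1 = (n : ℤ) + 2)] at h
      rw [(by ring : (n : ℤ) + 1 - 1 = ((n : ℤ)))] at h
      rw [(by norm_num : (0 : ℤ) - 1 = (-1 : ℤ))] at h
      rw [(by norm_num : (0 : ℤ) + 1 = (1 : ℤ))] at h
      rw [gesselF_neg (n + 6) (by omega) ((n : ℤ)) (-1) (Or.inr (by norm_num))] at h
      rw [(by omega : n + 1 + 6 = n + 6 + 1)]
      rw [(by push_cast; ring : ((n + 1 : ℕ) : ℤ) = (n : ℤ) + 1)]
      rw [h, mul_add, mul_add, mul_add]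
      rw [i40, i60, i41]
      try ring

theorem gessel_C4_k3 (n : ℕ) :
    144 * gesselF (n + 6) (n : ℤ) 0 =
      (n + 1) * (n ^ 5 + 32 * n ^ 4 + 407 * n ^ 3 + 2620 * n ^ 2 + 8604 * n + 12240) := by
  have h := (key n).2.2.2.2.2.2.2.2.2
  rw [h]
  ring
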